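/- Every K-Lusin Rothberger space is σ-compact. -/

import Mathlib

open Set Function TopologicalSpace MeasureTheory

universe u

/-- A space is analytic if it is a continuous image of the Baire space `ℕ → ℕ`. -/
def IsAnalyticSpace (X : Type*) [TopologicalSpace X] : Prop :=
  ∃ f : (ℕ → ℕ) → X, Continuous f ∧ Surjective f

/-- A space is Lusin if it is an injective continuous image of the Baire space. -/
def IsLusinSpace (X : Type*) [TopologicalSpace X] : Prop :=
  ∃ f : (ℕ → ℕ) → X, Continuous f ∧ Injective f ∧ Surjective f

/-- A map is perfect if it is continuous, closed, and has compact fibers. -/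
def IsPerfectMap {X Y : Type*} [TopologicalSpace X] [TopologicalSpace Y] (f : X → Y) : Prop :=
  Continuous f ∧ IsClosedMap f ∧ ∀ y : Y, IsCompact (f ⁻¹' {y})

/-- The remainder `βX \ X` of a space in its Stone–Čech compactification. -/
def StoneCechRemainder (X : Type u) [TopologicalSpace X] : Set (StoneCech X) :=
  (Set.range (stoneCechUnit : X → StoneCech X))ᶜ

/-- A space is co-analytic if its Stone–Čech remainder is analytic. -/
def CoAnalytic (X : Type u) [TopologicalSpace X] : Prop :=
  IsAnalyticSpace ↥(StoneCechRemainder X)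

/-- A space is Čech-complete if it is a `Gδ` subset of its Stone–Čech compactification. -/
def CechComplete (X : Type u) [TopologicalSpace X] : Prop :=
  IsGδ (Set.range (stoneCechUnit : X → StoneCech X))

/-- A space is K-analytic if it is a continuous image of a Lindelöf Čech-complete
(Tychonoff) space. -/
def KAnalytic (X : Type u) [TopologicalSpace X] : Prop :=
  ∃ (Y : Type u) (_ : TopologicalSpace Y) (_ : T35Space Y),
    LindelofSpace Y ∧ CechComplete Y ∧ ∃ f : Y → X, Continuous f ∧ Surjective f

/-- A space is K-Lusin if it is an injective continuous image of a Lindelöf Čech-complete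
(Tychonoff) space. -/
def KLusin (X : Type u) [TopologicalSpace X] : Prop :=
  ∃ (Y : Type u) (_ : TopologicalSpace Y) (_ : T35Space Y),
    LindelofSpace Y ∧ CechComplete Y ∧ ∃ f : Y → X, Continuous f ∧ Injective f ∧ Surjective f

/-- The Menger property. -/
def MengerSpace (X : Type*) [TopologicalSpace X] : Prop :=
  ∀ U : ℕ → Set (Set X), (∀ n, ∀ u ∈ U n, IsOpen u) → (∀ n, ⋃₀ U n = univ) →
    ∃ V : ℕ → Set (Set X), (∀ n, V n ⊆ U n ∧ (V n).Finite) ∧ ⋃₀ (⋃ n, V n) = univ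

/-- The Rothberger property. -/
def RothbergerSpace (X : Type*) [TopologicalSpace X] : Prop :=
  ∀ U : ℕ → Set (Set X), (∀ n, ∀ u ∈ U n, IsOpen u) → (∀ n, ⋃₀ U n = univ) →
    ∃ V : ℕ → Set X, (∀ n, V n ∈ U n) ∧ (⋃ n, V n) = univ

/-- A space is productively Lindelöf if its product with every Lindelöf (Tychonoff)
space is Lindelöf. -/
def ProductivelyLindelof (X : Type u) [TopologicalSpace X] : Prop :=
  ∀ (Y : Type u) (_ : TopologicalSpace Y) (_ : T35Space Y),
    LindelofSpace Y → LindelofSpace (X × Y)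

/-- A Michael space is a Lindelöf (Tychonoff) space whose product with the Baire space
is not Lindelöf. -/
def ExistsMichaelSpace : Prop :=
  ∃ (Y : Type u) (_ : TopologicalSpace Y) (_ : T35Space Y),
    LindelofSpace Y ∧ ¬ LindelofSpace (Y × (ℕ → ℕ))

/-- The Hurewicz property: every Čech-complete space in which `X` embeds contains a
σ-compact subspace containing the image of `X`. -/
def HurewiczSpace (X : Type u) [TopologicalSpace X] : Prop :=
  ∀ (Y : Type u) (_ : TopologicalSpace Y) (_ : T35Space Y), CechComplete Y →
    ∀ f : X → Y, Topology.IsEmbedding f → ∃ S : Set Y, IsSigmaCompact S ∧ range f ⊆ S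

/-- A space is projectively σ-compact if each of its continuous images in a separable
metrizable space is σ-compact. -/
def ProjectivelySigmaCompact (X : Type u) [TopologicalSpace X] : Prop :=
  ∀ (M : Type u) (_ : TopologicalSpace M) (_ : SeparableSpace M) (_ : MetrizableSpace M)
    (f : X → M), Continuous f → IsSigmaCompact (range f)

/-- A space is projectively countable if each of its continuous images in a separable
metrizable space is countable. -/
def ProjectivelyCountable (X : Type u) [TopologicalSpace X] : Prop :=
  ∀ (M : Type u) (_ : TopologicalSpace M) (_ : SeparableSpace M) (_ : MetrizableSpace M)
    (f : X → M), Continuous f → (range f).Countable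

/-- The Alster property. -/
def AlsterSpace (X : Type*) [TopologicalSpace X] : Prop :=
  ∀ G : Set (Set X), (∀ g ∈ G, IsGδ g) → ⋃₀ G = univ →
    (∀ K : Set X, IsCompact K → ∃ F : Set (Set X), F ⊆ G ∧ F.Finite ∧ K ⊆ ⋃₀ F) →
    ∃ C : Set (Set X), C ⊆ G ∧ C.Countable ∧ ⋃₀ C = univ

/-- A compact set has countable character if it has a countable neighborhood base of
open sets. -/
def HasCountableChar {X : Type*} [TopologicalSpace X] (L : Set X) : Prop :=
  ∃ B : ℕ → Set X, (∀ n, IsOpen (B n) ∧ L ⊆ B n) ∧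
    ∀ U : Set X, IsOpen U → L ⊆ U → ∃ n, B n ⊆ U

/-- A space is of countable type if every compact set is contained in a compact set
of countable character. -/
def CountableType (X : Type*) [TopologicalSpace X] : Prop :=
  ∀ K : Set X, IsCompact K → ∃ L : Set X, IsCompact L ∧ K ⊆ L ∧ HasCountableChar L

/-- A space is nowhere locally compact if no point has a compact neighborhood. -/
def NowhereLocallyCompact (X : Type*) [TopologicalSpace X] : Prop :=
  ∀ x : X, ∀ K ∈ nhds x, ¬ IsCompact (K : Set X)

/-- Weight at most `c`: there is a basis of cardinality at most `c`. -/
def WeightLE (X : Type u) [TopologicalSpace X] (c : Cardinal.{u}) : Prop :=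
  ∃ B : Set (Set X), IsTopologicalBasis B ∧ Cardinal.mk B ≤ c

/-- A space is Frolík if it is homeomorphic to a closed subspace of a countable product
of σ-compact (Tychonoff) spaces. -/
def FrolikSpace (X : Type u) [TopologicalSpace X] : Prop :=
  ∃ (Y : ℕ → Type u) (_ : ∀ n, TopologicalSpace (Y n)) (_ : ∀ n, T35Space (Y n))
    (_ : ∀ n, SigmaCompactSpace (Y n)) (C : Set (∀ n, Y n)),
    IsClosed C ∧ Nonempty (X ≃ₜ ↥C)

/-- An s-space: some compactification has a countable open source for `X`. -/
def SSpace (X : Type u) [TopologicalSpace X] : Prop :=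
  ∃ (K : Type u) (_ : TopologicalSpace K) (_ : CompactSpace K) (_ : T2Space K)
    (e : X → K), Topology.IsEmbedding e ∧ DenseRange e ∧
      ∃ S : Set (Set K), S.Countable ∧ (∀ s ∈ S, IsOpen s) ∧
        ∃ F : Set (Set (Set K)), (∀ T ∈ F, T ⊆ S ∧ T.Nonempty) ∧
          range e = ⋃ T ∈ F, ⋂₀ T

/-- A space is Lindelöf p if it admits a perfect map onto a separable metrizable space. -/
def LindelofP (X : Type u) [TopologicalSpace X] : Prop :=
  ∃ (M : Type u) (_ : TopologicalSpace M) (_ : SeparableSpace M) (_ : MetrizableSpace M)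
    (f : X → M), IsPerfectMap f ∧ Surjective f

/-- A space is proper K-analytic if it admits a perfect map onto an analytic subspace
of `ℝ^ω`. -/
def ProperKAnalytic (X : Type u) [TopologicalSpace X] : Prop :=
  ∃ A : Set (ℕ → ℝ), IsAnalyticSpace ↥A ∧ ∃ f : X → ↥A, IsPerfectMap f ∧ Surjective f

/-- A space is proper K-Lusin if it admits a perfect map onto a Lusin subspace of `ℝ^ω`. -/
def ProperKLusin (X : Type u) [TopologicalSpace X] : Prop :=
  ∃ A : Set (ℕ → ℝ), IsLusinSpace ↥A ∧ ∃ f : X → ↥A, IsPerfectMap f ∧ Surjective f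

/-- A space is absolute Borel if, viewed as a subset of its Stone–Čech compactification,
it belongs to the σ-algebra generated by the closed sets. -/
def AbsoluteBorel (X : Type u) [TopologicalSpace X] : Prop :=
  MeasurableSet[MeasurableSpace.generateFrom {s : Set (StoneCech X) | IsClosed s}]
    (Set.range (stoneCechUnit : X → StoneCech X))


/-!
Write the Lindelöf Čech-complete space `Y` as a `Gδ` set `S = ⋂ Gₙ` in `βY` and suppose it is not
σ-compact. A relatively closed piece `A = S ∩ C` that is not σ-compact has two points near which it
is nowhere σ-compact: otherwise `A` is σ-compact by Lindelöfness away from the one bad point, while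
closed neighbourhoods of that point inside the `Gₙ` cut out a compact core. So `A` splits into two
disjoint non-σ-compact closed pieces inside any `Gₙ`; iterating gives a Cantor scheme whose limit
is a compact subset of `S` carrying a dyadic system of compact sets. Its injective image in `X` is a
dyadic system of closed sets, which a Rothberger space cannot have: a selection from the covers
`{(Dₙ⁰)ᶜ, (Dₙ¹)ᶜ}` determines a branch whose intersection is left uncovered.
-/

open Topology

structure IsDyadicSystem {X : Type*} (A : ℕ → Bool → Set X) : Prop where
  disjoint : ∀ n, Disjoint (A n false) (A n true)
  nonempty_iInter : ∀ j : ℕ → Bool, (⋂ n, A n (j n)).Nonempty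

namespace IsDyadicSystem

variable {X Y : Type*} {A : ℕ → Bool → Set X}

theorem image (hA : IsDyadicSystem A) {f : X → Y} (hf : Injective f) :
    IsDyadicSystem fun n b => f '' A n b where
  disjoint n := (disjoint_image_iff hf).2 (hA.disjoint n)
  nonempty_iInter j := ((hA.nonempty_iInter j).image f).mono (image_iInter_subset _ _)

theorem preimage {B : ℕ → Bool → Set Y} (hB : IsDyadicSystem B) {f : X → Y}
    (hf : ∀ n b, B n b ⊆ range f) : IsDyadicSystem fun n b => f ⁻¹' B n b where
  disjoint n := (hB.disjoint n).preimage f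
  nonempty_iInter j := by
    obtain ⟨y, hy⟩ := hB.nonempty_iInter j
    obtain ⟨x, rfl⟩ := hf 0 (j 0) (mem_iInter.1 hy 0)
    exact ⟨x, mem_iInter.2 fun n => mem_iInter.1 hy n⟩

end IsDyadicSystem

theorem RothbergerSpace.not_isDyadicSystem {X : Type*} [TopologicalSpace X]
    (hX : RothbergerSpace X) {A : ℕ → Bool → Set X} (hA : ∀ n b, IsClosed (A n b)) :
    ¬ IsDyadicSystem A := by
  intro hD
  obtain ⟨V, hVU, hV⟩ := hX (fun n => {(A n false)ᶜ, (A n true)ᶜ})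
    (fun n => by simp [(hA n false).isOpen_compl, (hA n true).isOpen_compl])
    (fun n => by rw [sUnion_pair, ← compl_inter, (hD.disjoint n).inter_eq, compl_empty])
  have hV_eq : ∀ n, ∃ b, V n = (A n b)ᶜ := fun n => by
    rcases hVU n with h | h
    exacts [⟨false, h⟩, ⟨true, h⟩]
  choose j hj using hV_eq
  obtain ⟨x, hx⟩ := hD.nonempty_iInter j
  obtain ⟨n, hn⟩ := mem_iUnion.1 (hV ▸ mem_univ x)
  exact (hj n ▸ hn) (mem_iInter.1 hx n)

section SigmaCompactNear

variable {X : Type*} [TopologicalSpace X]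

theorem IsSigmaCompact.inter_isClosed {s t : Set X} (hs : IsSigmaCompact s) (ht : IsClosed t) :
    IsSigmaCompact (s ∩ t) := by
  obtain ⟨K, hK, rfl⟩ := hs
  exact ⟨fun n => K n ∩ t, fun n => (hK n).inter_right ht, (iUnion_inter t K).symm⟩

theorem nonempty_of_not_isSigmaCompact {s : Set X} (h : ¬ IsSigmaCompact s) : s.Nonempty :=
  nonempty_iff_ne_empty.2 fun hs => h (hs ▸ isSigmaCompact_empty)

theorem IsSigmaCompact.union {s t : Set X} (hs : IsSigmaCompact s) (ht : IsSigmaCompact t) :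
    IsSigmaCompact (s ∪ t) := by
  rw [union_eq_iUnion]
  exact isSigmaCompact_iUnion _ fun b => by cases b <;> assumption

def IsSigmaCompactNear (A : Set X) (x : X) : Prop :=
  ∃ U ∈ 𝓝 x, IsSigmaCompact (A ∩ U)

theorem IsSigmaCompactNear.inter_isClosed {A F : Set X} {x : X} (h : IsSigmaCompactNear A x)
    (hF : IsClosed F) : IsSigmaCompactNear (A ∩ F) x := by
  obtain ⟨U, hU, hAU⟩ := h
  exact ⟨U, hU, inter_right_comm A F U ▸ hAU.inter_isClosed hF⟩

theorem IsLindelof.isSigmaCompact_of_forall_isSigmaCompactNear {A : Set X} (hA : IsLindelof A)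
    (h : ∀ x ∈ A, IsSigmaCompactNear A x) : IsSigmaCompact A := by
  choose! U hU hAU using h
  obtain ⟨t, htc, htA, hAt⟩ := hA.elim_nhds_subcover U hU
  have hA_eq : A = ⋃ x ∈ t, A ∩ U x := by
    rw [← inter_iUnion₂]
    exact (inter_eq_left.2 hAt).symm
  rw [hA_eq]
  exact isSigmaCompact_biUnion htc fun x hx => hAU x (htA x hx)

end SigmaCompactNear

section CompactGδ

variable {K : Type*} [TopologicalSpace K] [CompactSpace K] [T2Space K] {G : ℕ → Set K}

theorem isSigmaCompact_of_forall_ne_isSigmaCompactNear (hG : ∀ n, IsOpen (G n))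
    (hS : IsLindelof (⋂ n, G n)) {C : Set K} (hC : IsClosed C) {y : K} (hy : y ∈ ⋂ n, G n)
    (h : ∀ x ∈ (⋂ n, G n) ∩ C, x ≠ y → IsSigmaCompactNear ((⋂ n, G n) ∩ C) x) :
    IsSigmaCompact ((⋂ n, G n) ∩ C) := by
  set A := (⋂ n, G n) ∩ C
  have hV : ∀ n, ∃ V, (V ∈ 𝓝 y ∧ IsClosed V) ∧ V ⊆ G n := fun n =>
    (closed_nhds_basis y).mem_iff.1 ((hG n).mem_nhds (mem_iInter.1 hy n))
  choose V hV hVG using hV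
  have hcore : IsCompact (A ∩ ⋂ n, V n) := by
    have : A ∩ ⋂ n, V n = C ∩ ⋂ n, V n := by
      rw [inter_assoc, inter_eq_right]
      exact inter_subset_right.trans (iInter_mono hVG)
    rw [this]
    exact (hC.inter (isClosed_iInter fun n => (hV n).2)).isCompact
  have hrest : ∀ n, IsSigmaCompact (A ∩ (interior (V n))ᶜ) := fun n => by
    have hL : IsLindelof (A ∩ (interior (V n))ᶜ) :=
      (hS.inter_right hC).inter_right isOpen_interior.isClosed_compl
    refine hL.isSigmaCompact_of_forall_isSigmaCompactNear fun x hx => ?_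
    have hxy : x ≠ y := by
      rintro rfl
      exact hx.2 (mem_interior_iff_mem_nhds.2 (hV n).1)
    exact (h x hx.1 hxy).inter_isClosed isOpen_interior.isClosed_compl
  have hA_eq : A = (A ∩ ⋂ n, V n) ∪ ⋃ n, A ∩ (interior (V n))ᶜ := by
    refine Subset.antisymm (fun x hx => ?_) (union_subset inter_subset_left
      (iUnion_subset fun n => inter_subset_left))
    by_cases hxV : ∀ n, x ∈ interior (V n)
    · exact Or.inl ⟨hx, mem_iInter.2 fun n => interior_subset (hxV n)⟩
    · obtain ⟨n, hn⟩ := not_forall.1 hxV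
      exact Or.inr (mem_iUnion.2 ⟨n, hx, hn⟩)
  rw [hA_eq]
  exact hcore.isSigmaCompact.union (isSigmaCompact_iUnion _ hrest)

theorem exists_split_of_not_isSigmaCompact (hG : ∀ n, IsOpen (G n))
    (hS : IsLindelof (⋂ n, G n)) {C : Set K} (hC : IsClosed C)
    (hσ : ¬ IsSigmaCompact ((⋂ n, G n) ∩ C)) (n : ℕ) :
    ∃ D : Bool → Set K, (∀ b, IsClosed (D b) ∧ D b ⊆ C ∩ G n ∧
      ¬ IsSigmaCompact ((⋂ n, G n) ∩ D b)) ∧ Disjoint (D false) (D true) := by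
  set S := ⋂ n, G n
  have hpts : ∃ x₀ ∈ S ∩ C, ∃ x₁ ∈ S ∩ C, x₀ ≠ x₁ ∧
      ¬ IsSigmaCompactNear (S ∩ C) x₀ ∧ ¬ IsSigmaCompactNear (S ∩ C) x₁ := by
    by_contra! hnot
    refine hσ ?_
    by_cases hy : ∃ y ∈ S ∩ C, ¬ IsSigmaCompactNear (S ∩ C) y
    · obtain ⟨y, hy, hyn⟩ := hy
      exact isSigmaCompact_of_forall_ne_isSigmaCompactNear hG hS hC hy.1
        fun x hx hxy => hnot y hy x hx hxy.symm hyn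
    · push Not at hy
      exact (hS.inter_right hC).isSigmaCompact_of_forall_isSigmaCompactNear hy
  have hpiece : ∀ x ∈ S ∩ C, ¬ IsSigmaCompactNear (S ∩ C) x → ∀ W, IsOpen W → x ∈ W →
      ∃ D, IsClosed D ∧ D ⊆ C ∩ G n ∧ D ⊆ W ∧ ¬ IsSigmaCompact (S ∩ D) := by
    intro x hx hxn W hW hxW
    obtain ⟨V, ⟨hV, hVc⟩, hVW⟩ := (closed_nhds_basis x).mem_iff.1
      (Filter.inter_mem (hW.mem_nhds hxW) ((hG n).mem_nhds (mem_iInter.1 hx.1 n)))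
    refine ⟨C ∩ V, hC.inter hVc, inter_subset_inter_right C (hVW.trans inter_subset_right),
      inter_subset_right.trans (hVW.trans inter_subset_left), fun hσV => hxn ⟨V, hV, ?_⟩⟩
    rwa [inter_assoc]
  obtain ⟨x₀, hx₀, x₁, hx₁, hne, h₀, h₁⟩ := hpts
  obtain ⟨W₀, W₁, hW₀, hW₁, hxW₀, hxW₁, hW⟩ := t2_separation hne
  obtain ⟨D₀, hD₀c, hD₀C, hD₀W, hσ₀⟩ := hpiece x₀ hx₀ h₀ W₀ hW₀ hxW₀
  obtain ⟨D₁, hD₁c, hD₁C, hD₁W, hσ₁⟩ := hpiece x₁ hx₁ h₁ W₁ hW₁ hxW₁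
  exact ⟨fun b => bif b then D₁ else D₀, Bool.forall_bool.2 ⟨⟨hD₀c, hD₀C, hσ₀⟩, hD₁c, hD₁C, hσ₁⟩,
    hW.mono hD₀W hD₁W⟩

end CompactGδ

/-- Binary words are lists with the newest letter at the head. -/
structure IsCantorScheme {X : Type*} (T : List Bool → Set X) : Prop where
  cons_subset : ∀ b t, T (b :: t) ⊆ T t
  disjoint_cons : ∀ t, Disjoint (T (false :: t)) (T (true :: t))

namespace IsCantorScheme

variable {X : Type*} {T : List Bool → Set X}

theorem disjoint_of_length_eq (hT : IsCantorScheme T) {l l' : List Bool}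
    (hl : l.length = l'.length) (hne : l ≠ l') : Disjoint (T l) (T l') := by
  induction l generalizing l' with
  | nil => exact absurd (List.length_eq_zero_iff.1 hl.symm).symm hne
  | cons b t ih =>
    obtain _ | ⟨b', t'⟩ := l'
    · simp at hl
    by_cases ht : t = t'
    · subst ht
      cases b <;> cases b'
      exacts [absurd rfl hne, hT.disjoint_cons t, (hT.disjoint_cons t).symm, absurd rfl hne]
    · exact (ih (Nat.succ_injective hl) ht).mono (hT.cons_subset b t) (hT.cons_subset b' t')

theorem exists_isDyadicSystem [TopologicalSpace X] [CompactSpace X] (hT : IsCantorScheme T)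
    (hc : ∀ l, IsClosed (T l)) (hne : ∀ l, (T l).Nonempty) :
    ∃ A : ℕ → Bool → Set X, (∀ n b, IsCompact (A n b) ∧
      ∀ m, A n b ⊆ ⋃ l ∈ {l : List Bool | l.length = m}, T l) ∧ IsDyadicSystem A := by
  have hlevel : ∀ m, IsClosed (⋃ l ∈ {l : List Bool | l.length = m}, T l) := fun m =>
    (List.finite_length_eq Bool m).isClosed_biUnion fun l _ => hc l
  set L := ⋂ m, ⋃ l ∈ {l : List Bool | l.length = m}, T l
  -- `A n b` consists of the points of `L` whose branch has letter `b` in position `n`.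
  refine ⟨fun n b => L ∩ ⋃ t ∈ {t : List Bool | t.length = n}, T (b :: t), fun n b =>
    ⟨((isClosed_iInter hlevel).inter ((List.finite_length_eq Bool n).isClosed_biUnion
      fun t _ => hc _)).isCompact, fun m => inter_subset_left.trans (iInter_subset _ m)⟩,
    ⟨fun n => ?_, fun j => ?_⟩⟩
  · refine disjoint_left.2 fun x ⟨_, hx⟩ ⟨_, hx'⟩ => ?_
    obtain ⟨t, ht, hxt⟩ := mem_iUnion₂.1 hx
    obtain ⟨t', ht', hxt'⟩ := mem_iUnion₂.1 hx'
    exact disjoint_left.1 (hT.disjoint_of_length_eq (l := false :: t) (l' := true :: t')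
      (by simp_all) (by simp)) hxt hxt'
  · let B : ℕ → List Bool := fun n => ((List.range n).reverse.map j)
    have hB_succ : ∀ n, B (n + 1) = j n :: B n := fun n => by simp [B, List.range_succ]
    have hB_length : ∀ n, (B n).length = n := fun n => by simp [B]
    obtain ⟨x, hx⟩ := (hc (B 0)).isCompact.nonempty_iInter_of_sequence_nonempty_isCompact_isClosed
      (fun n => T (B n)) (fun n => hB_succ n ▸ hT.cons_subset _ _) (fun n => hne _)
      (fun n => hc _)
    rw [mem_iInter] at hx
    refine ⟨x, mem_iInter.2 fun n => ⟨mem_iInter.2 fun m => mem_iUnion₂.2 ⟨B m, hB_length m, hx m⟩,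
      mem_iUnion₂.2 ⟨B n, hB_length n, hB_succ n ▸ hx (n + 1)⟩⟩⟩

end IsCantorScheme

theorem IsGδ.exists_isCompact_isDyadicSystem {K : Type*} [TopologicalSpace K] [CompactSpace K]
    [T2Space K] {S : Set K} (hS : IsGδ S) (hSL : IsLindelof S) (hσ : ¬ IsSigmaCompact S) :
    ∃ A : ℕ → Bool → Set K, (∀ n b, IsCompact (A n b) ∧ A n b ⊆ S) ∧ IsDyadicSystem A := by
  obtain ⟨G, hG, rfl⟩ := hS.eq_iInter_nat
  let Piece := {C : Set K // IsClosed C ∧ ¬ IsSigmaCompact ((⋂ n, G n) ∩ C)}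
  have hsplit : ∀ (C : Piece) (n : ℕ), ∃ D : Bool → Piece,
      (∀ b, (D b).1 ⊆ C.1 ∩ G n) ∧ Disjoint (D false).1 (D true).1 := fun C n => by
    obtain ⟨D, hD, hdisj⟩ := exists_split_of_not_isSigmaCompact hG hSL C.2.1 C.2.2 n
    exact ⟨fun b => ⟨D b, (hD b).1, (hD b).2.2⟩, fun b => (hD b).2.1, hdisj⟩
  choose split hsplit_sub hsplit_disj using hsplit
  let T : List Bool → Piece := fun l =>
    l.rec ⟨univ, isClosed_univ, by rwa [inter_univ]⟩ fun b t Tt => split Tt t.length b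
  have hne : ∀ l, (T l).1.Nonempty := fun l =>
    (nonempty_of_not_isSigmaCompact (T l).2.2).mono inter_subset_right
  obtain ⟨A, hA, hD⟩ := IsCantorScheme.exists_isDyadicSystem (T := fun l => (T l).1)
    ⟨fun b t => (hsplit_sub _ _ b).trans inter_subset_left, fun t => hsplit_disj _ _⟩
    (fun l => (T l).2.1) hne
  refine ⟨A, fun n b => ⟨(hA n b).1, fun x hx => mem_iInter.2 fun m => ?_⟩, hD⟩
  obtain ⟨l, hl, hxl⟩ := mem_iUnion₂.1 ((hA n b).2 (m + 1) hx)
  obtain _ | ⟨c, t⟩ := l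
  · simp at hl
  · exact Nat.succ_injective hl ▸ ((hsplit_sub _ _ c).trans inter_subset_right) hxl

theorem CechComplete.exists_isCompact_isDyadicSystem {Y : Type u} [TopologicalSpace Y]
    [CompletelyRegularSpace Y] [LindelofSpace Y] (hY : CechComplete Y)
    (hσ : ¬ SigmaCompactSpace Y) :
    ∃ A : ℕ → Bool → Set Y, (∀ n b, IsCompact (A n b)) ∧ IsDyadicSystem A := by
  have hind := isInducing_stoneCechUnit (X := Y)
  have hσβ : ¬ IsSigmaCompact (range (stoneCechUnit : Y → StoneCech Y)) := by
    rwa [← image_univ, ← hind.isSigmaCompact_iff, isSigmaCompact_univ_iff]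
  obtain ⟨A, hA, hD⟩ := IsGδ.exists_isCompact_isDyadicSystem hY
    (isLindelof_range continuous_stoneCechUnit) hσβ
  exact ⟨fun n b => stoneCechUnit ⁻¹' A n b,
    fun n b => hind.isCompact_preimage' (hA n b).1 (hA n b).2, hD.preimage fun n b => (hA n b).2⟩

/-- K-Lusin Rothberger spaces are σ-compact. -/
theorem kLusin_rothberger_sigmaCompact
    (X : Type u) [TopologicalSpace X] [T35Space X]
    (hK : KLusin X) (hR : RothbergerSpace X) : SigmaCompactSpace X := by
  obtain ⟨Y, _, _, _, hY, f, hf, hf_inj, hf_surj⟩ := hK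
  by_cases hσ : SigmaCompactSpace Y
  · rw [← isSigmaCompact_univ_iff, ← hf_surj.range_eq, ← image_univ]
    exact isSigmaCompact_univ.image hf
  · obtain ⟨A, hA, hD⟩ := hY.exists_isCompact_isDyadicSystem hσ
    exact absurd (hD.image hf_inj)
      (hR.not_isDyadicSystem fun n b => ((hA n b).image hf).isClosed)
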